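/- Second-moment estimate for the truncated variables (proof step 5, formula (10)): for every n ≥ 1, (1/n²) Σ_{k=1}^n 𝔼[Y_{n,k}²] ≤ 2 (1 + 1/n)² ∫_0^1 ψ_n(y) dy. -/

import Mathlib

open MeasureTheory Filter

noncomputable def upperExp {Ω : Type*} [MeasurableSpace Ω] (Ps : Set (Measure Ω)) (Z : Ω → ℝ) : ℝ :=
  ⨆ P : Ps, ∫ ω, Z ω ∂(P : Measure Ω)

noncomputable def lowerExp {Ω : Type*} [MeasurableSpace Ω] (Ps : Set (Measure Ω)) (Z : Ω → ℝ) : ℝ :=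
  ⨅ P : Ps, ∫ ω, Z ω ∂(P : Measure Ω)

noncomputable def upperCap {Ω : Type*} [MeasurableSpace Ω] (Ps : Set (Measure Ω)) (A : Set Ω) : ℝ :=
  ⨆ P : Ps, ((P : Measure Ω) A).toReal

noncomputable def lowerCap {Ω : Type*} [MeasurableSpace Ω] (Ps : Set (Measure Ω)) (A : Set Ω) : ℝ :=
  ⨅ P : Ps, ((P : Measure Ω) A).toReal

/-!
If `|g| ≤ |f|` and `g` vanishes where `|f| ≥ n + 1`, then `|g| ≤ (n + 1) min (|f| / n, 1)`.
By the layer-cake identity `min (t, 1)² = 2 ∫₀¹ y 1{y < t} dy` and Fubini,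
`∫ min (|f| / n, 1)² dP = 2 ∫₀¹ y P(|f| > n y) dy` for every `P`, and `P ≤ V` bounds this by the
capacity integral uniformly in `P ∈ 𝒫`. Applied to `g = Y_{n,k}`, `f = X_k`, summed over `k` and
divided by `n²`, this is the estimate, since `(n + 1)² / n² = (1 + 1 / n)²`.
-/

open Set

section UpperCapacity

variable {Ω : Type*} [MeasurableSpace Ω] {Ps : Set (Measure Ω)}

lemma upperCap_nonneg (A : Set Ω) : 0 ≤ upperCap Ps A :=
  Real.iSup_nonneg fun _ => ENNReal.toReal_nonneg

lemma measureReal_le_upperCap (hprob : ∀ P ∈ Ps, IsProbabilityMeasure P) {P : Measure Ω}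
    (hP : P ∈ Ps) (A : Set Ω) : P.real A ≤ upperCap Ps A := by
  refine le_ciSup (f := fun P : Ps => ((P : Measure Ω) A).toReal) ⟨1, ?_⟩ ⟨P, hP⟩
  rintro _ ⟨Q, rfl⟩
  have := hprob Q Q.2
  exact measureReal_le_one

lemma upperCap_mono (hprob : ∀ P ∈ Ps, IsProbabilityMeasure P) {A B : Set Ω} (hAB : A ⊆ B) :
    upperCap Ps A ≤ upperCap Ps B :=
  Real.iSup_le (fun P => have := hprob P P.2
    (measureReal_mono hAB).trans (measureReal_le_upperCap hprob P.2 B)) (upperCap_nonneg B)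

lemma upperExp_le_of_forall_integral_le {Z : Ω → ℝ} {c : ℝ} (hc : 0 ≤ c)
    (h : ∀ P ∈ Ps, ∫ ω, Z ω ∂P ≤ c) : upperExp Ps Z ≤ c :=
  Real.iSup_le (fun P => h P P.2) hc

lemma integrableOn_mul_upperCap_lt (hprob : ∀ P ∈ Ps, IsProbabilityMeasure P) (h : Ω → ℝ)
    {a : ℝ} (ha : 0 ≤ a) :
    IntegrableOn (fun y => y * upperCap Ps {ω | a * y < h ω}) (Icc 0 1) := by
  have hanti : Antitone fun y => upperCap Ps {ω | a * y < h ω} := fun _ _ hy =>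
    upperCap_mono hprob fun _ hω => (mul_le_mul_of_nonneg_left hy ha).trans_lt hω
  exact (hanti.locallyIntegrable.integrableOn_isCompact isCompact_Icc).continuousOn_mul
    continuousOn_id isCompact_Icc

end UpperCapacity

lemma setIntegral_Icc_indicator_Iio_self {t : ℝ} (ht : 0 ≤ t) :
    ∫ y in Icc (0 : ℝ) 1, (Iio t).indicator (fun y => y) y = min t 1 ^ 2 / 2 := by
  have hIcc : Icc (0 : ℝ) 1 ∩ Iic t = Icc 0 (min t 1) := by
    ext y; simp only [mem_inter_iff, mem_Icc, mem_Iic, le_min_iff]; tauto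
  rw [setIntegral_indicator measurableSet_Iio,
    setIntegral_congr_set (EventuallyEq.rfl.inter Iio_ae_eq_Iic), hIcc,
    integral_Icc_eq_integral_Ioc, ← intervalIntegral.integral_of_le (le_min ht zero_le_one),
    integral_id]
  ring

lemma abs_le_add_one_mul_min_div_one {a b n : ℝ} (hn : 0 < n) (hba : |b| ≤ a)
    (hb : n + 1 ≤ a → b = 0) : |b| ≤ (n + 1) * min (a / n) 1 := by
  rcases le_or_gt (n + 1) a with ha | ha
  · rw [hb ha, abs_zero]
    have : 0 ≤ a := (abs_nonneg b).trans hba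
    positivity
  · rw [mul_min_of_nonneg _ _ (by linarith), mul_one]
    refine le_min (hba.trans ?_) (hba.trans ha.le)
    rw [mul_div_assoc', le_div_iff₀ hn]
    nlinarith [(abs_nonneg b).trans hba]

section LayerCake

variable {Ω : Type*} [MeasurableSpace Ω]

lemma integral_min_one_sq_eq {P : Measure Ω} [IsFiniteMeasure P] {h : Ω → ℝ} (hh : Measurable h)
    (h0 : 0 ≤ h) :
    ∫ ω, min (h ω) 1 ^ 2 ∂P = 2 * ∫ y in Icc (0 : ℝ) 1, y * P.real {ω | y < h ω} := by
  set F : Ω → ℝ → ℝ := fun ω y => (Iio (h ω)).indicator (fun y => y) y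
  have hF : Integrable (Function.uncurry F) (P.prod (volume.restrict (Icc 0 1))) := by
    have hmeas : Measurable (Function.uncurry F) :=
      Measurable.ite (measurableSet_lt measurable_snd (hh.comp measurable_fst)) measurable_snd
        measurable_const
    refine .of_bound hmeas.aestronglyMeasurable 1 ?_
    filter_upwards [Measure.quasiMeasurePreserving_snd.ae (ae_restrict_mem measurableSet_Icc)]
      with p hp
    by_cases hlt : p.2 < h p.1 <;>
      simp [F, Function.uncurry, hlt, abs_of_nonneg hp.1, hp.2]
  have hslice : ∀ y, ∫ ω, F ω y ∂P = y * P.real {ω | y < h ω} := by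
    intro y
    have : (fun ω => F ω y) = {ω | y < h ω}.indicator fun _ => y := by
      ext ω; simp [F, indicator_apply]
    rw [this, integral_indicator_const _ (measurableSet_lt measurable_const hh), smul_eq_mul,
      mul_comm]
  calc ∫ ω, min (h ω) 1 ^ 2 ∂P = ∫ ω, 2 * (∫ y in Icc (0 : ℝ) 1, F ω y) ∂P := by
        congr 1; ext ω; rw [setIntegral_Icc_indicator_Iio_self (h0 ω)]; ring
    _ = 2 * ∫ y in Icc (0 : ℝ) 1, ∫ ω, F ω y ∂P := by
        rw [integral_const_mul, integral_integral_swap hF]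
    _ = 2 * ∫ y in Icc (0 : ℝ) 1, y * P.real {ω | y < h ω} := by simp only [hslice]

lemma integral_sq_le_of_abs_le_of_eq_zero {P : Measure Ω} [IsFiniteMeasure P] {f g : Ω → ℝ}
    (hf : Measurable f) (hg : Measurable g) {n : ℝ} (hn : 0 < n) (hgf : ∀ ω, |g ω| ≤ |f ω|)
    (hg0 : ∀ ω, n + 1 ≤ |f ω| → g ω = 0) :
    ∫ ω, g ω ^ 2 ∂P ≤ 2 * (n + 1) ^ 2 * ∫ y in Icc (0 : ℝ) 1, y * P.real {ω | n * y < |f ω|} := by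
  have hpt : ∀ ω, g ω ^ 2 ≤ (n + 1) ^ 2 * min (|f ω| / n) 1 ^ 2 := fun ω => by
    rw [← mul_pow, ← sq_abs]
    exact pow_le_pow_left₀ (abs_nonneg _) (abs_le_add_one_mul_min_div_one hn (hgf ω) (hg0 ω)) 2
  have hmin : Integrable (fun ω => min (|f ω| / n) 1 ^ 2) P := by
    refine .of_bound (by fun_prop) 1 (ae_of_all _ fun ω => ?_)
    have : 0 ≤ min (|f ω| / n) 1 := le_min (by positivity) zero_le_one
    rw [Real.norm_of_nonneg (by positivity)]
    exact pow_le_one₀ this (min_le_right _ _)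
  have hsq : Integrable (fun ω => g ω ^ 2) P :=
    (hmin.const_mul _).mono' (by fun_prop) (ae_of_all _ fun ω => by
      rw [Real.norm_of_nonneg (sq_nonneg _)]; exact hpt ω)
  have hsets : ∀ y, {ω | y < |f ω| / n} = {ω | n * y < |f ω|} := fun y => by
    ext ω; show y < |f ω| / n ↔ n * y < |f ω|; rw [lt_div_iff₀ hn, mul_comm]
  calc ∫ ω, g ω ^ 2 ∂P ≤ ∫ ω, (n + 1) ^ 2 * min (|f ω| / n) 1 ^ 2 ∂P :=
        integral_mono hsq (hmin.const_mul _) hpt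
    _ = (n + 1) ^ 2 * (2 * ∫ y in Icc (0 : ℝ) 1, y * P.real {ω | y < |f ω| / n}) := by
        rw [integral_const_mul, integral_min_one_sq_eq (by fun_prop) fun ω => by positivity]
    _ = _ := by simp only [hsets]; ring

lemma upperExp_sq_le_of_abs_le_of_eq_zero {Ps : Set (Measure Ω)}
    (hprob : ∀ P ∈ Ps, IsProbabilityMeasure P) {f g : Ω → ℝ}
    (hf : Measurable f) (hg : Measurable g) {n : ℝ} (hn : 0 < n) (hgf : ∀ ω, |g ω| ≤ |f ω|)
    (hg0 : ∀ ω, n + 1 ≤ |f ω| → g ω = 0) :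
    upperExp Ps (fun ω => g ω ^ 2) ≤
      2 * (n + 1) ^ 2 * ∫ y in Icc (0 : ℝ) 1, y * upperCap Ps {ω | n * y < |f ω|} := by
  have hint_nonneg : 0 ≤ ∫ y in Icc (0 : ℝ) 1, y * upperCap Ps {ω | n * y < |f ω|} :=
    setIntegral_nonneg measurableSet_Icc fun y hy => mul_nonneg hy.1 (upperCap_nonneg _)
  refine upperExp_le_of_forall_integral_le (by positivity) fun P hP => ?_
  have := hprob P hP
  refine (integral_sq_le_of_abs_le_of_eq_zero hf hg hn hgf hg0).trans ?_
  refine mul_le_mul_of_nonneg_left (integral_mono_of_nonneg ?_ ?_ ?_) (by positivity)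
  · exact ae_restrict_of_forall_mem measurableSet_Icc fun y hy => mul_nonneg hy.1 measureReal_nonneg
  · exact integrableOn_mul_upperCap_lt hprob _ hn.le
  · exact ae_restrict_of_forall_mem measurableSet_Icc fun y hy =>
      mul_le_mul_of_nonneg_left (measureReal_le_upperCap hprob hP _) hy.1

end LayerCake

theorem truncated_second_moment_estimate_general
    {Ω : Type*} [MeasurableSpace Ω] (Ps : Set (Measure Ω))
    (hprob : ∀ P ∈ Ps, IsProbabilityMeasure P)
    (X : ℕ → Ω → ℝ) (hX : ∀ k, Measurable (X k))
    (χ : ℕ → ℝ → ℝ)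
    (hχLip : ∀ n, ∃ K : NNReal, LipschitzWith K (χ n))
    (hχzero : ∀ n : ℕ, ∀ x : ℝ, (n : ℝ) + 1 ≤ |x| → χ n x = 0)
    (hχrange : ∀ n : ℕ, ∀ x : ℝ, χ n x ∈ Set.Icc (0 : ℝ) 1)
    (Y : ℕ → ℕ → Ω → ℝ) (hY : ∀ n k, Y n k = fun ω => X k ω * χ n |X k ω|)
    (ψ : ℕ → ℝ → ℝ)
    (hψ : ∀ n : ℕ, ∀ y : ℝ, ψ n y = ∑ k ∈ Finset.Icc 1 n, y * upperCap Ps {ω | (n : ℝ) * y < |X k ω|}) :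
    ∀ n : ℕ, 1 ≤ n →
      (1 / (n : ℝ) ^ 2) * ∑ k ∈ Finset.Icc 1 n, upperExp Ps (fun ω => Y n k ω ^ 2) ≤
        2 * (1 + 1 / (n : ℝ)) ^ 2 * ∫ y in Set.Icc (0 : ℝ) 1, ψ n y := by
  intro n hn
  have hn0 : (0 : ℝ) < n := by exact_mod_cast hn
  have hYk : ∀ k, upperExp Ps (fun ω => Y n k ω ^ 2) ≤ 2 * ((n : ℝ) + 1) ^ 2 *
      ∫ y in Icc (0 : ℝ) 1, y * upperCap Ps {ω | (n : ℝ) * y < |X k ω|} := fun k => by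
    obtain ⟨K, hK⟩ := hχLip n
    refine upperExp_sq_le_of_abs_le_of_eq_zero hprob (hX k) ?_ hn0 (fun ω => ?_) (fun ω hω => ?_)
    · rw [hY]; exact (hX k).mul (hK.continuous.measurable.comp (hX k).abs)
    · simp only [hY, abs_mul]
      exact mul_le_of_le_one_right (abs_nonneg _)
        (abs_le.2 ⟨by linarith [(hχrange n |X k ω|).1], (hχrange n |X k ω|).2⟩)
    · simp only [hY, hχzero n _ (by rwa [abs_abs]), mul_zero]
  have hψ_integral : ∫ y in Icc (0 : ℝ) 1, ψ n y = ∑ k ∈ Finset.Icc 1 n,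
      ∫ y in Icc (0 : ℝ) 1, y * upperCap Ps {ω | (n : ℝ) * y < |X k ω|} := by
    simp_rw [hψ n]
    exact integral_finsetSum _ fun k _ => integrableOn_mul_upperCap_lt hprob _ hn0.le
  rw [hψ_integral, Finset.mul_sum, Finset.mul_sum]
  refine Finset.sum_le_sum fun k _ => ?_
  calc 1 / (n : ℝ) ^ 2 * upperExp Ps (fun ω => Y n k ω ^ 2)
      ≤ 1 / (n : ℝ) ^ 2 * (2 * ((n : ℝ) + 1) ^ 2 *
          ∫ y in Icc (0 : ℝ) 1, y * upperCap Ps {ω | (n : ℝ) * y < |X k ω|}) :=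
        mul_le_mul_of_nonneg_left (hYk k) (by positivity)
    _ = _ := by field_simp

/-- second-moment estimate for the truncated variables (proof step 5,
formula (10)): for every `n ≥ 1`,
`(1/n²) Σ_{k=1}^n 𝔼[Y_{n,k}²] ≤ 2 (1 + 1/n)² ∫_0^1 ψ_n(y) dy`. -/
theorem truncated_second_moment_estimate
    {Ω : Type*} [MeasurableSpace Ω] (Ps : Set (Measure Ω)) (hne : Ps.Nonempty)
    (hprob : ∀ P ∈ Ps, IsProbabilityMeasure P)
    (X : ℕ → Ω → ℝ) (hX : ∀ k, Measurable (X k))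
    (χ : ℕ → ℝ → ℝ)
    (hχLip : ∀ n, ∃ K : NNReal, LipschitzWith K (χ n))
    (hχone : ∀ n : ℕ, ∀ x : ℝ, |x| ≤ (n : ℝ) → χ n x = 1)
    (hχzero : ∀ n : ℕ, ∀ x : ℝ, (n : ℝ) + 1 ≤ |x| → χ n x = 0)
    (hχrange : ∀ n : ℕ, ∀ x : ℝ, χ n x ∈ Set.Icc (0 : ℝ) 1)
    (Y : ℕ → ℕ → Ω → ℝ) (hY : ∀ n k, Y n k = fun ω => X k ω * χ n |X k ω|)
    (ψ : ℕ → ℝ → ℝ)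
    (hψ : ∀ n : ℕ, ∀ y : ℝ, ψ n y = ∑ k ∈ Finset.Icc 1 n, y * upperCap Ps {ω | (n : ℝ) * y < |X k ω|}) :
    ∀ n : ℕ, 1 ≤ n →
      (1 / (n : ℝ) ^ 2) * ∑ k ∈ Finset.Icc 1 n, upperExp Ps (fun ω => Y n k ω ^ 2) ≤
        2 * (1 + 1 / (n : ℝ)) ^ 2 * ∫ y in Set.Icc (0 : ℝ) 1, ψ n y :=
  truncated_second_moment_estimate_general Ps hprob X hX χ hχLip hχzero hχrange Y hY ψ hψ
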